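/- Let g : ℕ → ℝ → ℝ be defined recursively by g 0 t = 1 and g (k+1) t = (1/(1 − t)) · ∫_t^1 (g k u)/(2 − u) du. Then for every k ∈ ℕ, (1/2) · ∫_0^1 (g k t)/(2 − t) dt ≥ log 2 − 1/2, and moreover log 2 − 1/2 > 0. -/

import Mathlib

/-!
The averaging operator `loopAvg h t = (1 - t)⁻¹ ∫_t^1 h u / (2 - u) du` is monotone and fixes
`t ↦ (2 - t)⁻¹`, because `∫_t^1 (2 - u)⁻² du = (1 - t) / (2 - t)`. So it preserves the class of
integrable functions squeezed between `(2 - t)⁻¹` and `1` on `(0, 1)`, which contains `g 0 = 1`.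
Hence every `g k` lies above `(2 - t)⁻¹`, and
`(1/2) ∫_0^1 g k t / (2 - t) dt ≥ (1/2) ∫_0^1 (2 - t)⁻² dt = 1/4 > log 2 - 1/2`.
-/

/-- The nested integrals arising as the probability of repeating the loop
`e₃e₄e₅` at least `k` further times from state `(ℓ₀,(0,t))` in the stochastic
timed automaton `𝒜_unfair`:  `g 0 t = 1` and
`g (k+1) t = (1/(1-t)) · ∫_t^1 g k u / (2-u) du`. -/
noncomputable def unfairLoopProb : ℕ → ℝ → ℝ
  | 0, _ => 1
  | k + 1, t => (1 / (1 - t)) * ∫ u in t..1, unfairLoopProb k u / (2 - u)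

open MeasureTheory Set intervalIntegral

section InvSubSq

variable {a b c : ℝ} (hab : a ≤ b) (hbc : b < c)
include hab hbc

theorem sub_pos_of_mem_uIcc {u : ℝ} (hu : u ∈ uIcc a b) : 0 < c - u := by
  rw [uIcc_of_le hab] at hu; linarith [hu.2]

theorem intervalIntegrable_inv_sub_sq :
    IntervalIntegrable (fun u => ((c - u) ^ 2)⁻¹) volume a b :=
  (ContinuousOn.inv₀ (by fun_prop) fun u hu =>
    pow_ne_zero 2 (sub_pos_of_mem_uIcc hab hbc hu).ne').intervalIntegrable

theorem integral_inv_sub_sq : ∫ u in a..b, ((c - u) ^ 2)⁻¹ = (c - b)⁻¹ - (c - a)⁻¹ :=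
  integral_eq_sub_of_hasDerivAt (f := fun u => (c - u)⁻¹) (fun u hu => by
      simpa using ((hasDerivAt_id u).const_sub c).fun_inv (sub_pos_of_mem_uIcc hab hbc hu).ne')
    (intervalIntegrable_inv_sub_sq hab hbc)

end InvSubSq

noncomputable def loopAvg (h : ℝ → ℝ) (t : ℝ) : ℝ :=
  (1 / (1 - t)) * ∫ u in t..1, h u / (2 - u)

theorem unfairLoopProb_succ (k : ℕ) : unfairLoopProb (k + 1) = loopAvg (unfairLoopProb k) := rfl

structure LoopBounds (h : ℝ → ℝ) : Prop where
  integrableOn : IntegrableOn h (Ioo 0 1)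
  inv_two_sub_le : ∀ t ∈ Ioo (0 : ℝ) 1, (2 - t)⁻¹ ≤ h t
  le_one : ∀ t ∈ Ioo (0 : ℝ) 1, h t ≤ 1

namespace LoopBounds

variable {h : ℝ → ℝ} {t : ℝ}

theorem const_one : LoopBounds fun _ => 1 where
  integrableOn := integrableOn_const (by simp)
  inv_two_sub_le _ ht := inv_le_one_of_one_le₀ (by linarith [ht.2])
  le_one _ _ := le_rfl

theorem integrableOn_div (hh : LoopBounds h) : IntegrableOn (fun u => h u / (2 - u)) (Icc 0 1) :=
  ((integrableOn_Icc_iff_integrableOn_Ioo (f := h)).2 hh.integrableOn).mul_continuousOn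
    (ContinuousOn.inv₀ (by fun_prop) fun u hu => by linarith [hu.2]) isCompact_Icc

theorem intervalIntegrable_div (hh : LoopBounds h) (ht : t ∈ Icc (0 : ℝ) 1) :
    IntervalIntegrable (fun u => h u / (2 - u)) volume t 1 :=
  (intervalIntegrable_iff_integrableOn_Icc_of_le ht.2).2
    (hh.integrableOn_div.mono_set (Icc_subset_Icc ht.1 le_rfl))

theorem one_sub_div_two_sub_le_integral (hh : LoopBounds h) (ht : t ∈ Icc (0 : ℝ) 1) :
    (1 - t) / (2 - t) ≤ ∫ u in t..1, h u / (2 - u) := by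
  calc (1 - t) / (2 - t) = ∫ u in t..1, ((2 - u) ^ 2)⁻¹ := by
        rw [integral_inv_sub_sq ht.2 one_lt_two]
        field_simp [show 2 - t ≠ 0 by linarith [ht.2]]
        ring
    _ ≤ ∫ u in t..1, h u / (2 - u) := by
        refine integral_mono_on_of_le_Ioo ht.2 ?_ (hh.intervalIntegrable_div ht) fun u hu => ?_
        · exact intervalIntegrable_inv_sub_sq ht.2 one_lt_two
        · have hu' : u ∈ Ioo (0 : ℝ) 1 := ⟨ht.1.trans_lt hu.1, hu.2⟩
          rw [pow_two, mul_inv, ← div_eq_mul_inv]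
          exact div_le_div_of_nonneg_right (hh.inv_two_sub_le u hu') (by linarith [hu.2])

theorem integral_le_one_sub (hh : LoopBounds h) (ht : t ∈ Icc (0 : ℝ) 1) :
    ∫ u in t..1, h u / (2 - u) ≤ 1 - t := by
  calc ∫ u in t..1, h u / (2 - u) ≤ ∫ _ in t..1, (1 : ℝ) :=
        integral_mono_on_of_le_Ioo ht.2 (hh.intervalIntegrable_div ht) intervalIntegrable_const
          fun u hu => (div_le_one (by linarith [hu.2])).2
            (by linarith [hh.le_one u ⟨ht.1.trans_lt hu.1, hu.2⟩, hu.2])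
    _ = 1 - t := by simp

theorem inv_two_sub_le_loopAvg (hh : LoopBounds h) (ht : t ∈ Ioo (0 : ℝ) 1) :
    (2 - t)⁻¹ ≤ loopAvg h t := by
  have h1t : 0 < 1 - t := by linarith [ht.2]
  calc (2 - t)⁻¹ = 1 / (1 - t) * ((1 - t) / (2 - t)) := by field_simp
    _ ≤ loopAvg h t :=
        mul_le_mul_of_nonneg_left (hh.one_sub_div_two_sub_le_integral (Ioo_subset_Icc_self ht))
          (by positivity)

theorem loopAvg_le_one (hh : LoopBounds h) (ht : t ∈ Ioo (0 : ℝ) 1) : loopAvg h t ≤ 1 := by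
  have h1t : 0 < 1 - t := by linarith [ht.2]
  calc loopAvg h t ≤ 1 / (1 - t) * (1 - t) :=
        mul_le_mul_of_nonneg_left (hh.integral_le_one_sub (Ioo_subset_Icc_self ht)) (by positivity)
    _ = 1 := by field_simp

theorem continuousOn_loopAvg (hh : LoopBounds h) : ContinuousOn (loopAvg h) (Ioo 0 1) := by
  have hprim := continuousOn_primitive_interval_left (b := (1 : ℝ))
    (by rw [uIcc_of_le zero_le_one]; exact hh.integrableOn_div)
  rw [uIcc_of_le zero_le_one] at hprim
  exact (continuousOn_const.div (by fun_prop) fun t ht => by linarith [ht.2]).mul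
    (hprim.mono Ioo_subset_Icc_self)

theorem loopAvg (hh : LoopBounds h) : LoopBounds (loopAvg h) where
  integrableOn := IntegrableOn.of_bound measure_Ioo_lt_top
    (hh.continuousOn_loopAvg.aestronglyMeasurable measurableSet_Ioo) 1
    (ae_restrict_of_forall_mem measurableSet_Ioo fun t ht => by
      rw [Real.norm_eq_abs, abs_le]
      have : 0 ≤ (2 - t)⁻¹ := inv_nonneg.2 (by linarith [ht.2])
      constructor <;> linarith [hh.inv_two_sub_le_loopAvg ht, hh.loopAvg_le_one ht])
  inv_two_sub_le _ := hh.inv_two_sub_le_loopAvg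
  le_one _ := hh.loopAvg_le_one

end LoopBounds

theorem loopBounds_unfairLoopProb : ∀ k, LoopBounds (unfairLoopProb k)
  | 0 => LoopBounds.const_one
  | k + 1 => unfairLoopProb_succ k ▸ (loopBounds_unfairLoopProb k).loopAvg

/-- For every `k`, `(1/2) · ∫_0^1 g k t / (2 - t) dt ≥ log 2 - 1/2`,
and moreover `log 2 - 1/2 > 0`. -/
theorem unfairLoopProb_integral_ge :
    (∀ k : ℕ,
      (1 / 2 : ℝ) * ∫ t in (0 : ℝ)..1, unfairLoopProb k t / (2 - t) ≥
        Real.log 2 - 1 / 2) ∧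
    Real.log 2 - 1 / 2 > 0 := by
  refine ⟨fun k => ?_, by linarith [Real.log_two_gt_d9]⟩
  have half_le : (1 : ℝ) / 2 ≤ ∫ t in (0 : ℝ)..1, unfairLoopProb k t / (2 - t) := by
    simpa using (loopBounds_unfairLoopProb k).one_sub_div_two_sub_le_integral (t := 0) (by simp)
  linarith [Real.log_two_lt_d9]
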